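/- arXiv:2001.04888 — 3 statements merged into one kernel-verified Lean document; each statement's English description precedes it below -/
import Mathlib

section
/- For all r₁, r₂ > 0 and ε > 0, the capacitance coefficients satisfy C₁₁(ε) > 0, C₂₂(ε) > 0, C₁₂(ε) = C₂₁(ε) < 0, C₁₁(ε) + C₁₂(ε) > 0 and C₂₂(ε) + C₂₁(ε) > 0. Consequently the discriminant (C̃₁₁ − C̃₂₂)² + 4 C̃₁₂ C̃₂₁ is nonnegative, and both numbers λ₁(ε) and λ₂(ε) are strictly positive real numbers with λ₁(ε) ≤ λ₂(ε). -/
open Real Filter Topology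

/-- Half-distance between the fixed points of the composed reflections. -/
noncomputable def alphaBi (r₁ r₂ ε : ℝ) : ℝ :=
  Real.sqrt (ε * (2 * r₁ + ε) * (2 * r₂ + ε) * (2 * r₁ + 2 * r₂ + ε)) /
    (2 * (r₁ + r₂ + ε))

/-- Bispherical coordinate of the boundary of the first sphere. -/
noncomputable def xi1 (r₁ r₂ ε : ℝ) : ℝ := Real.arsinh (alphaBi r₁ r₂ ε / r₁)

/-- Bispherical coordinate of the boundary of the second sphere. -/
noncomputable def xi2 (r₁ r₂ ε : ℝ) : ℝ := Real.arsinh (alphaBi r₁ r₂ ε / r₂)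

/-- Capacitance coefficient C₁₁. -/
noncomputable def C11 (r₁ r₂ ε : ℝ) : ℝ :=
  8 * π * alphaBi r₁ r₂ ε *
    ∑' n : ℕ, Real.exp ((2 * n + 1) * xi2 r₁ r₂ ε) /
      (Real.exp ((2 * n + 1) * (xi1 r₁ r₂ ε + xi2 r₁ r₂ ε)) - 1)

/-- Capacitance coefficient C₂₂. -/
noncomputable def C22 (r₁ r₂ ε : ℝ) : ℝ :=
  8 * π * alphaBi r₁ r₂ ε *
    ∑' n : ℕ, Real.exp ((2 * n + 1) * xi1 r₁ r₂ ε) /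
      (Real.exp ((2 * n + 1) * (xi1 r₁ r₂ ε + xi2 r₁ r₂ ε)) - 1)

/-- Capacitance coefficient C₁₂. -/
noncomputable def C12 (r₁ r₂ ε : ℝ) : ℝ :=
  -(8 * π * alphaBi r₁ r₂ ε *
    ∑' n : ℕ, 1 / (Real.exp ((2 * n + 1) * (xi1 r₁ r₂ ε + xi2 r₁ r₂ ε)) - 1))

/-- Capacitance coefficient C₂₁. -/
noncomputable def C21 (r₁ r₂ ε : ℝ) : ℝ := C12 r₁ r₂ ε

/-- Rescaled capacitance coefficient C̃₁₁ = (3/(4π r₁³)) C₁₁. -/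
noncomputable def Ct11 (r₁ r₂ ε : ℝ) : ℝ := 3 / (4 * π * r₁ ^ 3) * C11 r₁ r₂ ε

/-- Rescaled capacitance coefficient C̃₂₂ = (3/(4π r₂³)) C₂₂. -/
noncomputable def Ct22 (r₁ r₂ ε : ℝ) : ℝ := 3 / (4 * π * r₂ ^ 3) * C22 r₁ r₂ ε

/-- Rescaled capacitance coefficient C̃₁₂ = (3/(4π r₁³)) C₁₂. -/
noncomputable def Ct12 (r₁ r₂ ε : ℝ) : ℝ := 3 / (4 * π * r₁ ^ 3) * C12 r₁ r₂ ε

/-- Rescaled capacitance coefficient C̃₂₁ = (3/(4π r₂³)) C₂₁. -/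
noncomputable def Ct21 (r₁ r₂ ε : ℝ) : ℝ := 3 / (4 * π * r₂ ^ 3) * C21 r₁ r₂ ε

/-- Smaller eigenvalue of the rescaled capacitance matrix. -/
noncomputable def lam1 (r₁ r₂ ε : ℝ) : ℝ :=
  1 / 2 * (Ct11 r₁ r₂ ε + Ct22 r₁ r₂ ε -
    Real.sqrt ((Ct11 r₁ r₂ ε - Ct22 r₁ r₂ ε) ^ 2 + 4 * Ct12 r₁ r₂ ε * Ct21 r₁ r₂ ε))

/-- Larger eigenvalue of the rescaled capacitance matrix. -/
noncomputable def lam2 (r₁ r₂ ε : ℝ) : ℝ :=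
  1 / 2 * (Ct11 r₁ r₂ ε + Ct22 r₁ r₂ ε +
    Real.sqrt ((Ct11 r₁ r₂ ε - Ct22 r₁ r₂ ε) ^ 2 + 4 * Ct12 r₁ r₂ ε * Ct21 r₁ r₂ ε))

lemma summable_aux (c d : ℝ) (hc : 0 < c) (hd : 0 ≤ d) :
    Summable (fun n : ℕ => Real.exp ((2 * n + 1) * d) /
      (Real.exp ((2 * n + 1) * (c + d)) - 1)) := by
  have hcd : 0 < c + d := by linarith
  have hone : Real.exp (-(c + d)) < 1 := by
    rw [Real.exp_lt_one_iff]; linarith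
  have hpos : 0 < 1 - Real.exp (-(c + d)) := by linarith
  have hgeo : Summable (fun n : ℕ =>
      (Real.exp (-c) / (1 - Real.exp (-(c + d)))) * Real.exp (-(2 * c)) ^ n) := by
    apply Summable.mul_left
    exact summable_geometric_of_lt_one (Real.exp_nonneg _)
      (by rw [Real.exp_lt_one_iff]; linarith)
  apply Summable.of_nonneg_of_le _ _ hgeo
  · intro n
    have h1 : (1 : ℝ) < Real.exp ((2 * n + 1) * (c + d)) := by
      rw [Real.one_lt_exp_iff]; positivity
    have := Real.exp_nonneg ((2 * (n:ℝ) + 1) * d)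
    apply div_nonneg this; linarith
  · intro n
    have hk : (1 : ℝ) ≤ 2 * (n : ℝ) + 1 := by
      have := Nat.cast_nonneg (α := ℝ) n; linarith
    have hden : Real.exp ((2 * n + 1) * (c + d)) * (1 - Real.exp (-(c + d))) ≤
        Real.exp ((2 * n + 1) * (c + d)) - 1 := by
      have : Real.exp ((2 * n + 1) * (c + d)) * Real.exp (-(c + d)) =
          Real.exp ((2 * n + 1) * (c + d) - (c + d)) := by
        rw [← Real.exp_add]; ring_nf
      have h2 : (1 : ℝ) ≤ Real.exp ((2 * n + 1) * (c + d) - (c + d)) := by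
        rw [Real.one_le_exp_iff]; nlinarith
      nlinarith [Real.exp_pos ((2 * n + 1) * (c + d))]
    have hden1 : (0 : ℝ) < Real.exp ((2 * n + 1) * (c + d)) - 1 := by
      have : (1 : ℝ) < Real.exp ((2 * n + 1) * (c + d)) := by
        rw [Real.one_lt_exp_iff]; positivity
      linarith
    have hden2 : 0 < Real.exp ((2 * n + 1) * (c + d)) * (1 - Real.exp (-(c + d))) := by
      positivity
    calc Real.exp ((2 * n + 1) * d) / (Real.exp ((2 * n + 1) * (c + d)) - 1)
        ≤ Real.exp ((2 * n + 1) * d) /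
            (Real.exp ((2 * n + 1) * (c + d)) * (1 - Real.exp (-(c + d)))) := by
          apply div_le_div_of_nonneg_left (Real.exp_nonneg _) hden2 hden
      _ = Real.exp (-c) / (1 - Real.exp (-(c + d))) * Real.exp (-(2 * c)) ^ n := by
          rw [← Real.exp_nat_mul, div_mul_eq_div_div, ← Real.exp_sub, div_mul_eq_mul_div,
            ← Real.exp_add]
          ring_nf

theorem capacitance_signs_and_eigenvalues (r₁ r₂ ε : ℝ) (hr₁ : 0 < r₁) (hr₂ : 0 < r₂)
    (hε : 0 < ε) :
    0 < C11 r₁ r₂ ε ∧ 0 < C22 r₁ r₂ ε ∧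
    C12 r₁ r₂ ε = C21 r₁ r₂ ε ∧ C12 r₁ r₂ ε < 0 ∧
    0 < C11 r₁ r₂ ε + C12 r₁ r₂ ε ∧ 0 < C22 r₁ r₂ ε + C21 r₁ r₂ ε ∧
    0 ≤ (Ct11 r₁ r₂ ε - Ct22 r₁ r₂ ε) ^ 2 + 4 * Ct12 r₁ r₂ ε * Ct21 r₁ r₂ ε ∧
    0 < lam1 r₁ r₂ ε ∧ 0 < lam2 r₁ r₂ ε ∧ lam1 r₁ r₂ ε ≤ lam2 r₁ r₂ ε := by

  have hα : 0 < alphaBi r₁ r₂ ε := by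
    unfold alphaBi
    exact div_pos (Real.sqrt_pos.mpr (by positivity)) (by linarith)
  have hx1 : 0 < xi1 r₁ r₂ ε := by
    unfold xi1; rw [Real.arsinh_pos_iff]; positivity
  have hx2 : 0 < xi2 r₁ r₂ ε := by
    unfold xi2; rw [Real.arsinh_pos_iff]; positivity
  set a := xi1 r₁ r₂ ε with ha
  set b := xi2 r₁ r₂ ε with hb
  have hD : ∀ n : ℕ, 0 < Real.exp ((2 * n + 1) * (a + b)) - 1 := by
    intro n
    have h : (1 : ℝ) < Real.exp ((2 * n + 1) * (a + b)) := by
      rw [Real.one_lt_exp_iff]; positivity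
    linarith
  have hS1 : Summable (fun n : ℕ => Real.exp ((2 * n + 1) * b) /
      (Real.exp ((2 * n + 1) * (a + b)) - 1)) := summable_aux a b hx1 hx2.le
  have hS2 : Summable (fun n : ℕ => Real.exp ((2 * n + 1) * a) /
      (Real.exp ((2 * n + 1) * (a + b)) - 1)) := by
    have h := summable_aux b a hx2 hx1.le
    simpa [add_comm] using h
  have hS0 : Summable (fun n : ℕ => 1 /
      (Real.exp ((2 * n + 1) * (a + b)) - 1)) := by
    have h := summable_aux (a + b) 0 (by linarith) le_rfl
    simpa using h
  have hp : 0 < 8 * π * alphaBi r₁ r₂ ε := by positivity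
  have hposS0 : 0 < ∑' n : ℕ, 1 / (Real.exp ((2 * n + 1) * (a + b)) - 1) := by
    refine Summable.tsum_pos hS0 (fun n => le_of_lt ?_) 0 ?_
    · have := hD n; positivity
    · have := hD 0; positivity
  have hposS1 : 0 < ∑' n : ℕ, Real.exp ((2 * n + 1) * b) /
      (Real.exp ((2 * n + 1) * (a + b)) - 1) := by
    refine Summable.tsum_pos hS1 (fun n => le_of_lt ?_) 0 ?_
    · have := hD n; positivity
    · have := hD 0; positivity
  have hposS2 : 0 < ∑' n : ℕ, Real.exp ((2 * n + 1) * a) /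
      (Real.exp ((2 * n + 1) * (a + b)) - 1) := by
    refine Summable.tsum_pos hS2 (fun n => le_of_lt ?_) 0 ?_
    · have := hD n; positivity
    · have := hD 0; positivity
  have hC11 : 0 < C11 r₁ r₂ ε := by
    unfold C11; exact mul_pos hp hposS1
  have hC22 : 0 < C22 r₁ r₂ ε := by
    unfold C22; exact mul_pos hp hposS2
  have hC12 : C12 r₁ r₂ ε < 0 := by
    unfold C12; rw [neg_lt, neg_zero]; exact mul_pos hp hposS0
  have hterm : ∀ (c : ℝ), 0 < c → ∀ n : ℕ,
      0 < Real.exp ((2 * n + 1) * c) / (Real.exp ((2 * n + 1) * (a + b)) - 1) -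
        1 / (Real.exp ((2 * n + 1) * (a + b)) - 1) := by
    intro c hc n
    rw [div_sub_div_same]
    have h1 : (1 : ℝ) < Real.exp ((2 * n + 1) * c) := by
      rw [Real.one_lt_exp_iff]; positivity
    have h2 := hD n
    exact div_pos (by linarith) h2
  have hsum1 : 0 < C11 r₁ r₂ ε + C12 r₁ r₂ ε := by
    unfold C11 C12
    rw [← ha, ← hb, ← sub_eq_add_neg, ← mul_sub]
    refine mul_pos hp ?_
    rw [← Summable.tsum_sub hS1 hS0]
    exact Summable.tsum_pos (hS1.sub hS0) (fun n => (hterm b hx2 n).le) 0 (hterm b hx2 0)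
  have hsum2 : 0 < C22 r₁ r₂ ε + C12 r₁ r₂ ε := by
    unfold C22 C12
    rw [← ha, ← hb, ← sub_eq_add_neg, ← mul_sub]
    refine mul_pos hp ?_
    rw [← Summable.tsum_sub hS2 hS0]
    exact Summable.tsum_pos (hS2.sub hS0) (fun n => (hterm a hx1 n).le) 0 (hterm a hx1 0)
  have hk1 : 0 < 3 / (4 * π * r₁ ^ 3) := by positivity
  have hk2 : 0 < 3 / (4 * π * r₂ ^ 3) := by positivity
  have hCt12 : Ct12 r₁ r₂ ε < 0 := mul_neg_of_pos_of_neg hk1 hC12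
  have hCt21 : Ct21 r₁ r₂ ε < 0 := mul_neg_of_pos_of_neg hk2 hC12
  have hCt11 : 0 < Ct11 r₁ r₂ ε := mul_pos hk1 hC11
  have hCt22 : 0 < Ct22 r₁ r₂ ε := mul_pos hk2 hC22
  have hprod : Ct12 r₁ r₂ ε * Ct21 r₁ r₂ ε < Ct11 r₁ r₂ ε * Ct22 r₁ r₂ ε := by
    have hsq : -C12 r₁ r₂ ε * -C12 r₁ r₂ ε < C11 r₁ r₂ ε * C22 r₁ r₂ ε :=
      mul_lt_mul'' (by linarith) (by linarith) (by linarith) (by linarith)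
    unfold Ct11 Ct22 Ct12 Ct21 C21
    nlinarith [hk1, hk2, mul_pos hk1 hk2]
  have hdiscnn : 0 ≤ (Ct11 r₁ r₂ ε - Ct22 r₁ r₂ ε) ^ 2 +
      4 * Ct12 r₁ r₂ ε * Ct21 r₁ r₂ ε := by
    nlinarith [sq_nonneg (Ct11 r₁ r₂ ε - Ct22 r₁ r₂ ε),
      mul_pos_of_neg_of_neg hCt12 hCt21]
  have hsqrt : Real.sqrt ((Ct11 r₁ r₂ ε - Ct22 r₁ r₂ ε) ^ 2 +
      4 * Ct12 r₁ r₂ ε * Ct21 r₁ r₂ ε) < Ct11 r₁ r₂ ε + Ct22 r₁ r₂ ε := by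
    rw [Real.sqrt_lt' (by linarith)]
    nlinarith [hprod]
  have hsqnn := Real.sqrt_nonneg ((Ct11 r₁ r₂ ε - Ct22 r₁ r₂ ε) ^ 2 +
      4 * Ct12 r₁ r₂ ε * Ct21 r₁ r₂ ε)
  refine ⟨hC11, hC22, rfl, hC12, hsum1, hsum2, hdiscnn, ?_, ?_, ?_⟩
  · unfold lam1; linarith
  · unfold lam2; linarith
  · unfold lam1 lam2; linarith
end

section
/- Let r₁, r₂ > 0. Then, as ε → 0⁺, the ratio (λ₁(ε) − C̃₂₂(ε)) / C̃₂₁(ε) converges to 1, and the ratio (λ₂(ε) − C̃₂₂(ε)) / C̃₂₁(ε) converges to −r₂³/r₁³. -/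
/-!
Write `S(a, B) = capSum a B = ∑ₙ e^{(2n+1)a} / (e^{(2n+1)B} - 1)`, so that `C₁₁`, `C₂₂`, `-C₁₂`
are `8πα` times `S(ξ₂, B)`, `S(ξ₁, B)`, `S(0, B)` with `B = ξ₁ + ξ₂`. Termwise,
`S(a, B) - S(0, B) ≤ ∑ₙ e^{-(2n+1)(B-a)} ≤ 1 / (2(B - a))`, while comparing `S(0, B)` with the
series of `artanh (e^{-B})` gives `B S(0, B) ≥ -½ log B → ∞`. As `ξ₁ ~ α/r₁` and `ξ₂ ~ α/r₂`,
both `S(ξᵢ, B) / S(0, B) → 1`, so `u = (C̃₁₁ - C̃₂₂) / C̃₂₁ → 1 - q` with `q = r₂³/r₁³`. Finally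
`C̃₁₂ = q C̃₂₁` and `C̃₂₁ < 0` turn the two ratios into `(u ± √(u² + 4q)) / 2`, which tend to `1`
and `-q`.
-/

open Real Filter Topology

noncomputable def capSum (a B : ℝ) : ℝ :=
  ∑' n : ℕ, exp ((2 * n + 1) * a) / (exp ((2 * n + 1) * B) - 1)

lemma exp_odd_mul_sub_one_pos {B : ℝ} (hB : 0 < B) (n : ℕ) : 0 < exp ((2 * n + 1) * B) - 1 :=
  sub_pos.2 (one_lt_exp_iff.2 (by positivity))

lemma exp_sub_one_div_exp_sub_one_le {x y : ℝ} (hxy : x ≤ y) (hy : 0 < y) :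
    (exp x - 1) / (exp y - 1) ≤ exp (x - y) := by
  rw [div_le_iff₀ (sub_pos.2 (one_lt_exp_iff.2 hy)), mul_sub, ← exp_add, sub_add_cancel, mul_one]
  linarith [exp_le_one_iff.2 (sub_nonpos.2 hxy)]

lemma exp_neg_div_le_one_div_exp_sub_one {x : ℝ} (hx : 0 < x) :
    exp (-x) / x ≤ 1 / (exp x - 1) := by
  rw [div_le_div_iff₀ hx (sub_pos.2 (one_lt_exp_iff.2 hx)), one_mul, mul_sub, ← exp_add,
    neg_add_cancel, exp_zero, mul_one]
  linarith [one_sub_le_exp_neg x]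

lemma hasSum_exp_neg_odd_mul {c : ℝ} (hc : 0 < c) :
    HasSum (fun n : ℕ => exp (-((2 * n + 1) * c))) (1 / (2 * sinh c)) := by
  have hterm :
      (fun n : ℕ => exp (-((2 * n + 1) * c))) = fun n => exp (-c) * exp (-(2 * c)) ^ n := by
    ext n
    rw [← exp_nat_mul, ← exp_add]
    ring_nf
  have hsum : 1 / (2 * sinh c) = exp (-c) * (1 - exp (-(2 * c)))⁻¹ := by
    have h1 : exp (-(2 * c)) < 1 := exp_lt_one_iff.2 (by linarith)
    have h2 : exp (-(2 * c)) = exp (-c) * exp (-c) := by rw [← exp_add]; ring_nf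
    have h3 : exp c * exp (-c) = 1 := by rw [← exp_add]; simp
    rw [← div_eq_mul_inv, div_eq_div_iff (mul_pos two_pos (sinh_pos_iff.2 hc)).ne' (by linarith),
      sinh_eq]
    linear_combination -h3 - h2
  rw [hterm, hsum]
  exact (hasSum_geometric_of_lt_one (exp_nonneg _) (exp_lt_one_iff.2 (by linarith))).mul_left _

lemma summable_capSum {a B : ℝ} (hB : 0 < B) (haB : a < B) :
    Summable (fun n : ℕ => exp ((2 * n + 1) * a) / (exp ((2 * n + 1) * B) - 1)) := by
  have hB1 : 0 < 1 - exp (-B) := by linarith [exp_lt_one_iff.2 (neg_lt_zero.2 hB)]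
  refine Summable.of_nonneg_of_le (fun n => ?_) (fun n => ?_)
    ((hasSum_exp_neg_odd_mul (sub_pos.2 haB)).summable.div_const (1 - exp (-B)))
  · have := exp_odd_mul_sub_one_pos hB n
    positivity
  · have hk : B ≤ (2 * n + 1) * B :=
      le_mul_of_one_le_left hB.le (by linarith [n.cast_nonneg (α := ℝ)])
    have hden : exp ((2 * n + 1) * B) * (1 - exp (-B)) ≤ exp ((2 * n + 1) * B) - 1 := by
      rw [mul_sub, mul_one, ← exp_add]
      linarith [one_le_exp (by linarith : 0 ≤ (2 * n + 1) * B + -B)]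
    rw [div_le_div_iff₀ (exp_odd_mul_sub_one_pos hB n) hB1]
    calc exp ((2 * n + 1) * a) * (1 - exp (-B))
        = exp (-((2 * n + 1) * (B - a))) * (exp ((2 * n + 1) * B) * (1 - exp (-B))) := by
          rw [← mul_assoc, ← exp_add]; ring_nf
      _ ≤ exp (-((2 * n + 1) * (B - a))) * (exp ((2 * n + 1) * B) - 1) := by gcongr

lemma capSum_sub_capSum_zero_le {a B : ℝ} (hB : 0 < B) (haB : a < B) :
    capSum a B - capSum 0 B ≤ 1 / (2 * (B - a)) := by
  have hc : 0 < B - a := sub_pos.2 haB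
  rw [capSum, capSum, ← (summable_capSum hB haB).tsum_sub (summable_capSum hB hB)]
  calc ∑' n : ℕ, (exp ((2 * n + 1) * a) / (exp ((2 * n + 1) * B) - 1)
          - exp ((2 * n + 1) * 0) / (exp ((2 * n + 1) * B) - 1))
      ≤ ∑' n : ℕ, exp (-((2 * n + 1) * (B - a))) := by
        refine ((summable_capSum hB haB).sub (summable_capSum hB hB)).tsum_le_tsum (fun n => ?_)
          (hasSum_exp_neg_odd_mul hc).summable
        rw [mul_zero, exp_zero, ← sub_div, show -((2 * n + 1) * (B - a)) =
          (2 * n + 1) * a - (2 * n + 1) * B by ring]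
        exact exp_sub_one_div_exp_sub_one_le (by gcongr) (by positivity)
    _ = 1 / (2 * sinh (B - a)) := (hasSum_exp_neg_odd_mul hc).tsum_eq
    _ ≤ 1 / (2 * (B - a)) := by gcongr; exact self_le_sinh_iff.2 hc.le

lemma capSum_zero_le {a B : ℝ} (ha : 0 ≤ a) (haB : a < B) : capSum 0 B ≤ capSum a B := by
  have hB : 0 < B := ha.trans_lt haB
  refine (summable_capSum hB hB).tsum_le_tsum (fun n => ?_) (summable_capSum hB haB)
  have := exp_odd_mul_sub_one_pos hB n
  gcongr

lemma capSum_zero_pos {B : ℝ} (hB : 0 < B) : 0 < capSum 0 B := by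
  have hpos : ∀ n : ℕ, 0 < exp ((2 * n + 1) * (0 : ℝ)) / (exp ((2 * n + 1) * B) - 1) := fun n => by
    have := exp_odd_mul_sub_one_pos hB n
    positivity
  exact (summable_capSum hB hB).tsum_pos (fun n => (hpos n).le) 0 (hpos 0)

lemma log_sub_log_le_two_mul_capSum_zero {B : ℝ} (hB : 0 < B) :
    log (1 + exp (-B)) - log (1 - exp (-B)) ≤ 2 * B * capSum 0 B := by
  have ht : |exp (-B)| < 1 := by
    rw [abs_of_pos (exp_pos _)]; exact exp_lt_one_iff.2 (neg_lt_zero.2 hB)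
  refine hasSum_le (fun k => ?_) (hasSum_log_sub_log_of_abs_lt_one ht)
    ((summable_capSum hB hB).hasSum.mul_left (2 * B))
  have hk : (0 : ℝ) < (2 * k + 1) * B := by positivity
  have := exp_neg_div_le_one_div_exp_sub_one hk
  rw [← exp_nat_mul, mul_zero, exp_zero]
  push_cast
  calc 2 * (1 / (2 * (k : ℝ) + 1)) * exp ((2 * k + 1) * -B)
      = 2 * B * (exp (-((2 * k + 1) * B)) / ((2 * k + 1) * B)) := by
        field_simp
    _ ≤ 2 * B * (1 / (exp ((2 * k + 1) * B) - 1)) := by gcongr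

lemma tendsto_mul_capSum_zero_atTop : Tendsto (fun B => B * capSum 0 B) (𝓝[>] 0) atTop := by
  have hlog : Tendsto (fun B => -log B / 2) (𝓝[>] 0) atTop :=
    (tendsto_neg_atBot_atTop.comp tendsto_log_nhdsGT_zero).atTop_div_const two_pos
  refine tendsto_atTop_mono' _ ?_ hlog
  filter_upwards [self_mem_nhdsWithin] with B (hB : 0 < B)
  have ht : 0 < 1 - exp (-B) := by linarith [exp_lt_one_iff.2 (neg_lt_zero.2 hB)]
  have h1 : 0 ≤ log (1 + exp (-B)) := log_nonneg (by linarith [exp_pos (-B)])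
  have h2 : log (1 - exp (-B)) ≤ log B := log_le_log ht (by linarith [one_sub_le_exp_neg B])
  linarith [log_sub_log_le_two_mul_capSum_zero hB]

lemma tendsto_capSum_div_capSum_zero {ι : Type*} {l : Filter ι} {a b : ι → ℝ} {ρ : ℝ}
    (ha : ∀ᶠ i in l, 0 ≤ a i) (hb : ∀ᶠ i in l, 0 < b i)
    (hab : Tendsto (fun i => a i + b i) l (𝓝[>] 0)) (hρ : Tendsto (fun i => a i / b i) l (𝓝 ρ)) :
    Tendsto (fun i => capSum (a i) (a i + b i) / capSum 0 (a i + b i)) l (𝓝 1) := by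
  have hbound : Tendsto (fun i => (a i / b i + 1) / 2 * ((a i + b i) * capSum 0 (a i + b i))⁻¹)
      l (𝓝 0) := by
    simpa using ((hρ.add_const 1).div_const 2).mul
      (tendsto_mul_capSum_zero_atTop.comp hab).inv_tendsto_atTop
  rw [← tendsto_sub_nhds_zero_iff]
  refine squeeze_zero' ?_ ?_ hbound <;> filter_upwards [ha, hb] with i hai hbi
  · rw [sub_nonneg, one_le_div (capSum_zero_pos (add_pos_of_nonneg_of_pos hai hbi))]
    exact capSum_zero_le hai (lt_add_of_pos_right _ hbi)
  · have hS := capSum_zero_pos (add_pos_of_nonneg_of_pos hai hbi)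
    calc capSum (a i) (a i + b i) / capSum 0 (a i + b i) - 1
        = (capSum (a i) (a i + b i) - capSum 0 (a i + b i)) / capSum 0 (a i + b i) := by
          field_simp
      _ ≤ 1 / (2 * b i) / capSum 0 (a i + b i) := by
          gcongr
          simpa using capSum_sub_capSum_zero_le (add_pos_of_nonneg_of_pos hai hbi)
            (lt_add_of_pos_right _ hbi)
      _ = (a i / b i + 1) / 2 * ((a i + b i) * capSum 0 (a i + b i))⁻¹ := by
          field_simp

lemma tendsto_arsinh_div_self : Tendsto (fun t => arsinh t / t) (𝓝[>] 0) (𝓝 1) := by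
  simpa [div_eq_inv_mul] using (hasDerivAt_arsinh 0).tendsto_slope_zero_right

lemma tendsto_nhdsGT_div_const {ι : Type*} {l : Filter ι} {f : ι → ℝ} (hf : Tendsto f l (𝓝[>] 0))
    {r : ℝ} (hr : 0 < r) : Tendsto (fun i => f i / r) l (𝓝[>] 0) := by
  rw [tendsto_nhdsWithin_iff] at hf ⊢
  exact ⟨by simpa using hf.1.div_const r, hf.2.mono fun i (hi : 0 < f i) => div_pos hi hr⟩

lemma tendsto_arsinh_nhdsGT : Tendsto arsinh (𝓝[>] 0) (𝓝[>] 0) := by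
  rw [tendsto_nhdsWithin_iff]
  refine ⟨?_, eventually_nhdsWithin_of_forall fun t ht => arsinh_pos_iff.2 ht⟩
  simpa using continuous_arsinh.continuousAt.tendsto.mono_left (nhdsWithin_le_nhds (a := (0:ℝ)))

lemma tendsto_arsinh_div_arsinh {ι : Type*} {l : Filter ι} {f : ι → ℝ} (hf : Tendsto f l (𝓝[>] 0))
    {r r' : ℝ} (hr : 0 < r) (hr' : 0 < r') :
    Tendsto (fun i => arsinh (f i / r) / arsinh (f i / r')) l (𝓝 (r' / r)) := by
  have key : Tendsto (fun i => arsinh (f i / r) / (f i / r) / (arsinh (f i / r') / (f i / r'))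
      * (r' / r)) l (𝓝 (1 / 1 * (r' / r))) :=
    ((tendsto_arsinh_div_self.comp (tendsto_nhdsGT_div_const hf hr)).div
      (tendsto_arsinh_div_self.comp (tendsto_nhdsGT_div_const hf hr')) one_ne_zero).mul_const _
  rw [div_one, one_mul] at key
  refine key.congr' ?_
  filter_upwards [(tendsto_nhdsWithin_iff.1 hf).2] with i (hi : 0 < f i)
  field_simp

section Capacitance

variable {r₁ r₂ : ℝ}

lemma alphaBi_pos (hr₁ : 0 < r₁) (hr₂ : 0 < r₂) {ε : ℝ} (hε : 0 < ε) : 0 < alphaBi r₁ r₂ ε := by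
  unfold alphaBi
  have : 0 < ε * (2 * r₁ + ε) * (2 * r₂ + ε) * (2 * r₁ + 2 * r₂ + ε) := by positivity
  positivity

lemma tendsto_alphaBi (hr₁ : 0 < r₁) (hr₂ : 0 < r₂) :
    Tendsto (alphaBi r₁ r₂) (𝓝[>] 0) (𝓝[>] 0) := by
  rw [tendsto_nhdsWithin_iff]
  refine ⟨?_, eventually_nhdsWithin_of_forall fun ε hε => alphaBi_pos hr₁ hr₂ hε⟩
  have hcont : ContinuousAt (alphaBi r₁ r₂) 0 :=
    (continuous_sqrt.continuousAt.comp (by fun_prop)).div (by fun_prop) (by simp; positivity)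
  simpa [alphaBi] using hcont.tendsto.mono_left nhdsWithin_le_nhds

lemma tendsto_xi1_add_xi2 (hr₁ : 0 < r₁) (hr₂ : 0 < r₂) :
    Tendsto (fun ε => xi1 r₁ r₂ ε + xi2 r₁ r₂ ε) (𝓝[>] 0) (𝓝[>] 0) := by
  have h₁ : Tendsto (xi1 r₁ r₂) (𝓝[>] 0) (𝓝[>] 0) :=
    tendsto_arsinh_nhdsGT.comp (tendsto_nhdsGT_div_const (tendsto_alphaBi hr₁ hr₂) hr₁)
  have h₂ : Tendsto (xi2 r₁ r₂) (𝓝[>] 0) (𝓝[>] 0) :=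
    tendsto_arsinh_nhdsGT.comp (tendsto_nhdsGT_div_const (tendsto_alphaBi hr₁ hr₂) hr₂)
  rw [tendsto_nhdsWithin_iff] at h₁ h₂ ⊢
  refine ⟨by simpa using h₁.1.add h₂.1, ?_⟩
  filter_upwards [h₁.2, h₂.2] with ε hε₁ hε₂
  exact add_pos (Set.mem_Ioi.1 hε₁) (Set.mem_Ioi.1 hε₂)

lemma xi1_pos (hr₁ : 0 < r₁) (hr₂ : 0 < r₂) {ε : ℝ} (hε : 0 < ε) : 0 < xi1 r₁ r₂ ε :=
  arsinh_pos_iff.2 (div_pos (alphaBi_pos hr₁ hr₂ hε) hr₁)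

lemma xi2_pos (hr₁ : 0 < r₁) (hr₂ : 0 < r₂) {ε : ℝ} (hε : 0 < ε) : 0 < xi2 r₁ r₂ ε :=
  arsinh_pos_iff.2 (div_pos (alphaBi_pos hr₁ hr₂ hε) hr₂)

lemma C11_eq_capSum (ε : ℝ) :
    C11 r₁ r₂ ε = 8 * π * alphaBi r₁ r₂ ε * capSum (xi2 r₁ r₂ ε) (xi1 r₁ r₂ ε + xi2 r₁ r₂ ε) :=
  rfl

lemma C22_eq_capSum (ε : ℝ) :
    C22 r₁ r₂ ε = 8 * π * alphaBi r₁ r₂ ε * capSum (xi1 r₁ r₂ ε) (xi1 r₁ r₂ ε + xi2 r₁ r₂ ε) :=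
  rfl

lemma C12_eq_capSum (ε : ℝ) :
    C12 r₁ r₂ ε = -(8 * π * alphaBi r₁ r₂ ε * capSum 0 (xi1 r₁ r₂ ε + xi2 r₁ r₂ ε)) := by
  simp [C12, capSum]

lemma Ct21_neg (hr₁ : 0 < r₁) (hr₂ : 0 < r₂) {ε : ℝ} (hε : 0 < ε) : Ct21 r₁ r₂ ε < 0 := by
  have := alphaBi_pos hr₁ hr₂ hε
  have := capSum_zero_pos (add_pos (xi1_pos hr₁ hr₂ hε) (xi2_pos hr₁ hr₂ hε))
  rw [Ct21, C21, C12_eq_capSum, mul_neg, neg_lt_zero]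
  positivity

lemma Ct12_eq_mul_Ct21 (hr₁ : 0 < r₁) (hr₂ : 0 < r₂) (ε : ℝ) :
    Ct12 r₁ r₂ ε = r₂ ^ 3 / r₁ ^ 3 * Ct21 r₁ r₂ ε := by
  rw [Ct12, Ct21, C21]
  field_simp

lemma Ct11_sub_Ct22_div_Ct21_eq (hr₁ : 0 < r₁) (hr₂ : 0 < r₂) {ε : ℝ} (hε : 0 < ε) :
    (Ct11 r₁ r₂ ε - Ct22 r₁ r₂ ε) / Ct21 r₁ r₂ ε =
      capSum (xi1 r₁ r₂ ε) (xi1 r₁ r₂ ε + xi2 r₁ r₂ ε) / capSum 0 (xi1 r₁ r₂ ε + xi2 r₁ r₂ ε) -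
        r₂ ^ 3 / r₁ ^ 3 * (capSum (xi2 r₁ r₂ ε) (xi1 r₁ r₂ ε + xi2 r₁ r₂ ε) /
          capSum 0 (xi1 r₁ r₂ ε + xi2 r₁ r₂ ε)) := by
  have := alphaBi_pos hr₁ hr₂ hε
  have := capSum_zero_pos (add_pos (xi1_pos hr₁ hr₂ hε) (xi2_pos hr₁ hr₂ hε))
  rw [Ct11, Ct22, Ct21, C21, C11_eq_capSum, C22_eq_capSum, C12_eq_capSum]
  field_simp
  ring

lemma tendsto_Ct11_sub_Ct22_div_Ct21 (hr₁ : 0 < r₁) (hr₂ : 0 < r₂) :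
    Tendsto (fun ε => (Ct11 r₁ r₂ ε - Ct22 r₁ r₂ ε) / Ct21 r₁ r₂ ε) (𝓝[>] 0)
      (𝓝 (1 - r₂ ^ 3 / r₁ ^ 3)) := by
  have hpos : ∀ᶠ ε in 𝓝[>] (0 : ℝ), 0 < xi1 r₁ r₂ ε ∧ 0 < xi2 r₁ r₂ ε :=
    eventually_nhdsWithin_of_forall fun ε hε => ⟨xi1_pos hr₁ hr₂ hε, xi2_pos hr₁ hr₂ hε⟩
  have h₁ := tendsto_capSum_div_capSum_zero (hpos.mono fun _ h => h.1.le) (hpos.mono fun _ h => h.2)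
    (tendsto_xi1_add_xi2 hr₁ hr₂) (tendsto_arsinh_div_arsinh (tendsto_alphaBi hr₁ hr₂) hr₁ hr₂)
  have h₂ := tendsto_capSum_div_capSum_zero (hpos.mono fun _ h => h.2.le) (hpos.mono fun _ h => h.1)
    (by simpa only [add_comm] using tendsto_xi1_add_xi2 hr₁ hr₂)
    (tendsto_arsinh_div_arsinh (tendsto_alphaBi hr₁ hr₂) hr₂ hr₁)
  simp only [add_comm (xi2 r₁ r₂ _)] at h₂
  rw [← mul_one (r₂ ^ 3 / r₁ ^ 3)]
  refine (h₁.sub (h₂.const_mul _)).congr' ?_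
  filter_upwards [self_mem_nhdsWithin] with ε hε
  exact (Ct11_sub_Ct22_div_Ct21_eq hr₁ hr₂ hε).symm

end Capacitance

lemma sqrt_sq_add_four_mul_mul_self_of_neg {d c q : ℝ} (hc : c < 0) :
    √(d ^ 2 + 4 * (q * c) * c) = -c * √((d / c) ^ 2 + 4 * q) := by
  have h : d ^ 2 + 4 * (q * c) * c = c ^ 2 * ((d / c) ^ 2 + 4 * q) := by
    field_simp [hc.ne]
  rw [h, sqrt_mul (sq_nonneg c), sqrt_sq_eq_abs, abs_of_neg hc]

lemma half_sub_sqrt_sub_div_of_neg {c₁₁ c₂₂ c q : ℝ} (hc : c < 0) :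
    (1 / 2 * (c₁₁ + c₂₂ - √((c₁₁ - c₂₂) ^ 2 + 4 * (q * c) * c)) - c₂₂) / c =
      ((c₁₁ - c₂₂) / c + √(((c₁₁ - c₂₂) / c) ^ 2 + 4 * q)) / 2 := by
  rw [sqrt_sq_add_four_mul_mul_self_of_neg hc]
  field_simp [hc.ne]
  ring

lemma half_add_sqrt_sub_div_of_neg {c₁₁ c₂₂ c q : ℝ} (hc : c < 0) :
    (1 / 2 * (c₁₁ + c₂₂ + √((c₁₁ - c₂₂) ^ 2 + 4 * (q * c) * c)) - c₂₂) / c =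
      ((c₁₁ - c₂₂) / c - √(((c₁₁ - c₂₂) / c) ^ 2 + 4 * q)) / 2 := by
  rw [sqrt_sq_add_four_mul_mul_self_of_neg hc]
  field_simp [hc.ne]
  ring

section RootLimits

variable {ι : Type*} {l : Filter ι} {u : ι → ℝ} {q : ℝ}

lemma tendsto_add_sqrt_div_two (hq : 0 ≤ 1 + q) (hu : Tendsto u l (𝓝 (1 - q))) :
    Tendsto (fun i => (u i + √(u i ^ 2 + 4 * q)) / 2) l (𝓝 1) := by
  have h := (hu.add ((hu.pow 2).add_const (4 * q)).sqrt).div_const 2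
  rwa [show (1 - q) ^ 2 + 4 * q = (1 + q) ^ 2 by ring, sqrt_sq hq,
    show (1 - q + (1 + q)) / 2 = 1 by ring] at h

lemma tendsto_sub_sqrt_div_two (hq : 0 ≤ 1 + q) (hu : Tendsto u l (𝓝 (1 - q))) :
    Tendsto (fun i => (u i - √(u i ^ 2 + 4 * q)) / 2) l (𝓝 (-q)) := by
  have h := (hu.sub ((hu.pow 2).add_const (4 * q)).sqrt).div_const 2
  rwa [show (1 - q) ^ 2 + 4 * q = (1 + q) ^ 2 by ring, sqrt_sq hq,
    show (1 - q - (1 + q)) / 2 = -q by ring] at h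

end RootLimits

theorem eigenvector_first_component_limits (r₁ r₂ : ℝ) (hr₁ : 0 < r₁) (hr₂ : 0 < r₂) :
    Tendsto (fun ε => (lam1 r₁ r₂ ε - Ct22 r₁ r₂ ε) / Ct21 r₁ r₂ ε)
      (𝓝[>] (0 : ℝ)) (𝓝 1) ∧
    Tendsto (fun ε => (lam2 r₁ r₂ ε - Ct22 r₁ r₂ ε) / Ct21 r₁ r₂ ε)
      (𝓝[>] (0 : ℝ)) (𝓝 (-(r₂ ^ 3 / r₁ ^ 3))) := by
  have hq : 0 ≤ 1 + r₂ ^ 3 / r₁ ^ 3 := by positivity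
  have hu := tendsto_Ct11_sub_Ct22_div_Ct21 hr₁ hr₂
  have hneg : ∀ᶠ ε in 𝓝[>] (0 : ℝ), Ct21 r₁ r₂ ε < 0 :=
    eventually_nhdsWithin_of_forall fun ε hε => Ct21_neg hr₁ hr₂ hε
  constructor
  · refine (tendsto_add_sqrt_div_two hq hu).congr' (hneg.mono fun ε hε => ?_)
    dsimp only
    rw [lam1, Ct12_eq_mul_Ct21 hr₁ hr₂, half_sub_sqrt_sub_div_of_neg hε]
  · refine (tendsto_sub_sqrt_div_two hq hu).congr' (hneg.mono fun ε hε => ?_)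
    dsimp only
    rw [lam2, Ct12_eq_mul_Ct21 hr₁ hr₂, half_add_sqrt_sub_div_of_neg hε]
end

section
/- As ξ → 0⁺, the quantity ξ · ∑_{n=0}^∞ 1/(e^{(2n+1)ξ} + 1) converges to (log 2)/2. -/
/-!
With `f x = 1 / (eˣ + 1)` and its antiderivative `G x = log (1 + e⁻ˣ)` (so `G' = -f`,
`G 0 = log 2`, `G → 0` at infinity), the mean value theorem squeezes each term `2ξ f((2n+1)ξ)` of
the Riemann sum between consecutive increments of the telescoping series
`∑ (G((2n+1)ξ) - G((2n+3)ξ)) = G ξ`. Hence `G ξ / 2 ≤ ξ ∑ f((2n+1)ξ) ≤ ξ f ξ + G ξ / 2`, and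
both bounds tend to `log 2 / 2`.
-/

open Real Filter Topology

theorem Antitone.hasSum_sub_succ {u : ℕ → ℝ} {l : ℝ} (hu : Antitone u)
    (hl : Tendsto u atTop (𝓝 l)) : HasSum (fun n => u n - u (n + 1)) (u 0 - l) := by
  rw [hasSum_iff_tendsto_nat_of_nonneg fun n => sub_nonneg.2 (hu n.le_succ)]
  simp_rw [Finset.sum_range_sub']
  exact tendsto_const_nhds.sub hl

theorem HasSum.tsum_mem_Icc_of_interlaced {g d : ℕ → ℝ} {s : ℝ} (hd : HasSum d s)
    (hg : ∀ n, 0 ≤ g n) (hgd : ∀ n, g (n + 1) ≤ d n) (hdg : ∀ n, d n ≤ g n) :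
    ∑' n, g n ∈ Set.Icc s (g 0 + s) := by
  have hg_succ : Summable fun n => g (n + 1) :=
    Summable.of_nonneg_of_le (fun n => hg _) hgd hd.summable
  have hg_sum : Summable g := (summable_nat_add_iff 1).1 hg_succ
  refine ⟨hd.tsum_eq ▸ hd.summable.tsum_le_tsum hdg hg_sum, ?_⟩
  rw [hg_sum.tsum_eq_zero_add, ← hd.tsum_eq]
  exact add_le_add le_rfl (hg_succ.tsum_le_tsum hgd hd.summable)

section Antiderivative

variable {f G : ℝ → ℝ}

theorem mul_le_sub_le_mul_of_hasDerivAt_neg (hG : ∀ x, HasDerivAt G (-f x) x) (hf : Antitone f)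
    {a h : ℝ} (hh : 0 < h) :
    h * f (a + h) ≤ G a - G (a + h) ∧ G a - G (a + h) ≤ h * f a := by
  obtain ⟨c, ⟨hac, hch⟩, hc⟩ := exists_hasDerivAt_eq_slope G (fun x => -f x)
    (lt_add_of_pos_right a hh) (fun x _ => (hG x).continuousAt.continuousWithinAt)
    (fun x _ => hG x)
  have hGc : G a - G (a + h) = h * f c := by
    rw [add_sub_cancel_left, eq_div_iff hh.ne'] at hc
    linarith
  rw [hGc]
  exact ⟨mul_le_mul_of_nonneg_left (hf hch.le) hh.le,
    mul_le_mul_of_nonneg_left (hf hac.le) hh.le⟩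

theorem tsum_mul_mem_Icc_of_hasDerivAt_neg (hG : ∀ x, HasDerivAt G (-f x) x) (hf : Antitone f)
    (hf₀ : ∀ x, 0 ≤ f x) {l : ℝ} (hGl : Tendsto G atTop (𝓝 l)) {h : ℝ} (hh : 0 < h) (a : ℝ) :
    ∑' n : ℕ, h * f (a + n * h) ∈ Set.Icc (G a - l) (h * f a + (G a - l)) := by
  set u : ℕ → ℝ := fun n => G (a + n * h)
  have hstep (n : ℕ) : h * f (a + (n + 1 : ℕ) * h) ≤ u n - u (n + 1) ∧
      u n - u (n + 1) ≤ h * f (a + n * h) := by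
    have hshift : a + (n + 1 : ℕ) * h = a + n * h + h := by push_cast; ring
    simp only [u, hshift]
    exact mul_le_sub_le_mul_of_hasDerivAt_neg hG hf hh
  have hu : Antitone u := antitone_nat_of_succ_le fun n =>
    sub_nonneg.1 ((mul_nonneg hh.le (hf₀ _)).trans (hstep n).1)
  have hu_lim : Tendsto u atTop (𝓝 l) := hGl.comp <| tendsto_atTop_add_const_left _ a <|
    tendsto_natCast_atTop_atTop.atTop_mul_const hh
  have htel := hu.hasSum_sub_succ hu_lim
  simpa [u] using htel.tsum_mem_Icc_of_interlaced (fun n => mul_nonneg hh.le (hf₀ _))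
    (fun n => (hstep n).1) (fun n => (hstep n).2)

end Antiderivative

theorem hasDerivAt_log_one_add_exp_neg (x : ℝ) :
    HasDerivAt (fun x => log (1 + exp (-x))) (-(1 / (exp x + 1))) x := by
  have hinner : HasDerivAt (fun x => 1 + exp (-x)) (-exp (-x)) x := by
    simpa using ((hasDerivAt_neg x).exp).const_add 1
  convert hinner.log (by positivity) using 1
  rw [exp_neg]
  field_simp

theorem tendsto_log_one_add_exp_neg_atTop :
    Tendsto (fun x => log (1 + exp (-x))) atTop (𝓝 0) := by
  simpa using (tendsto_exp_neg_atTop_nhds_zero.const_add 1).log (by norm_num)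

theorem continuous_log_one_add_exp_neg : Continuous fun x => log (1 + exp (-x)) :=
  (by fun_prop : Continuous fun x => 1 + exp (-x)).log fun x => by positivity

theorem mul_tsum_one_div_exp_odd_add_one_mem_Icc {ξ : ℝ} (hξ : 0 < ξ) :
    ξ * ∑' n : ℕ, 1 / (exp ((2 * n + 1) * ξ) + 1) ∈
      Set.Icc (log (1 + exp (-ξ)) / 2) (ξ * (1 / (exp ξ + 1)) + log (1 + exp (-ξ)) / 2) := by
  have hf : Antitone fun x : ℝ => 1 / (exp x + 1) := fun x y hxy =>
    one_div_le_one_div_of_le (by positivity) (by gcongr)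
  obtain ⟨hlow, hup⟩ := tsum_mul_mem_Icc_of_hasDerivAt_neg hasDerivAt_log_one_add_exp_neg hf
    (fun x => by positivity) tendsto_log_one_add_exp_neg_atTop (by positivity : 0 < 2 * ξ) ξ
  have hsum : ∑' n : ℕ, 2 * ξ * (1 / (exp (ξ + n * (2 * ξ)) + 1)) =
      2 * (ξ * ∑' n : ℕ, 1 / (exp ((2 * n + 1) * ξ) + 1)) := by
    have hnode (n : ℕ) : ξ + n * (2 * ξ) = (2 * n + 1) * ξ := by ring
    rw [tsum_mul_left]
    simp only [hnode]
    ring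
  rw [hsum, sub_zero] at hlow hup
  constructor <;> linarith

theorem riemann_sum_limit_log_two_div_two :
    Tendsto (fun ξ : ℝ => ξ * ∑' n : ℕ, 1 / (Real.exp ((2 * n + 1) * ξ) + 1))
      (𝓝[>] (0 : ℝ)) (𝓝 (Real.log 2 / 2)) := by
  have hlim {F : ℝ → ℝ} (hF : Continuous F) (h0 : F 0 = log 2 / 2) :
      Tendsto F (𝓝[>] 0) (𝓝 (log 2 / 2)) :=
    h0 ▸ hF.continuousAt.tendsto.mono_left nhdsWithin_le_nhds
  have hG := continuous_log_one_add_exp_neg.div_const 2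
  have hf : Continuous fun ξ : ℝ => ξ * (1 / (exp ξ + 1)) :=
    continuous_id.mul (continuous_const.div (by fun_prop) fun x => by positivity)
  refine tendsto_of_tendsto_of_tendsto_of_le_of_le' (hlim hG ?_) (hlim (hf.add hG) ?_) ?_ ?_
  · norm_num
  · norm_num
  · filter_upwards [self_mem_nhdsWithin] with ξ hξ
      using (mul_tsum_one_div_exp_odd_add_one_mem_Icc hξ).1
  · filter_upwards [self_mem_nhdsWithin] with ξ hξ
      using (mul_tsum_one_div_exp_odd_add_one_mem_Icc hξ).2
end
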